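/- Let N ≥ 1 and let φ : ℝ^N → ℝ be a continuous function with φ(x) > 0 for all x. Then there exists a countable family (K_i)_{i∈ℕ} of open axis-parallel cubes in ℝ^N, say K_i = ∏_{j=1}^N (c_{i,j}, c_{i,j} + s_i) with side length s_i > 0, such that: (1) ⋃_{i∈ℕ} K_i = ℝ^N; (2) for every i and every x ∈ K_i one has s_i < φ(x); (3) for every i, the set {j ∈ ℕ : j ≠ i and K_i ∩ K_j ≠ ∅} is finite with at most 4^N − 2^N elements. -/

import Mathlib

open Set

namespace Stmt0P

variable {N : ℕ}

noncomputable def idx (n : ℤ) (z : Fin N → ℝ) : Fin N → ℤ := fun j => ⌊z j * 2^n⌋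

def clC (n : ℤ) (k : Fin N → ℤ) : Set (Fin N → ℝ) :=
  {x | ∀ j, (k j : ℝ) * 2^(-n) ≤ x j ∧ x j ≤ ((k j : ℝ) + 1) * 2^(-n)}

def hoC (n : ℤ) (k : Fin N → ℤ) : Set (Fin N → ℝ) :=
  {x | ∀ j, (k j : ℝ) * 2^(-n) ≤ x j ∧ x j < ((k j : ℝ) + 1) * 2^(-n)}

noncomputable def cc (n : ℤ) (k : Fin N → ℤ) : Fin N → ℝ :=
  fun j => (k j : ℝ) * 2^(-n) - 2^(-n)/16

noncomputable def sc (n : ℤ) : ℝ := (9/8) * 2^(-n)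

noncomputable def oC (n : ℤ) (k : Fin N → ℤ) : Set (Fin N → ℝ) :=
  Set.univ.pi fun j => Set.Ioo (cc n k j) (cc n k j + sc n)

lemma zp (n : ℤ) : (0:ℝ) < 2^n := by positivity

lemma zp_neg_succ (n : ℤ) : (2:ℝ)^(-(n+1)) = 2^(-n)/2 := by
  have h : (2:ℝ)^(-(n+1)) * 2 = 2^(-n) := by
    rw [← zpow_add_one₀ (by norm_num : (2:ℝ) ≠ 0)]; norm_num
  linarith

lemma le1 (a b : ℝ) (n : ℤ) : a * 2^(-n) ≤ b ↔ a ≤ b * 2^n := by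
  rw [zpow_neg, ← div_eq_mul_inv, div_le_iff₀ (zp n)]

lemma le2 (a b : ℝ) (n : ℤ) : b ≤ a * 2^(-n) ↔ b * 2^n ≤ a := by
  rw [zpow_neg, ← div_eq_mul_inv, le_div_iff₀ (zp n)]

lemma lt2 (a b : ℝ) (n : ℤ) : b < a * 2^(-n) ↔ b * 2^n < a := by
  rw [zpow_neg, ← div_eq_mul_inv, lt_div_iff₀ (zp n)]

lemma hoC_subset_clC (n : ℤ) (k : Fin N → ℤ) : hoC n k ⊆ clC n k :=
  fun x hx j => ⟨(hx j).1, le_of_lt (hx j).2⟩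

lemma mem_hoC_idx (n : ℤ) (z : Fin N → ℝ) : z ∈ hoC n (idx n z) := by
  intro j
  constructor
  · exact (le1 _ _ _).2 (Int.floor_le _)
  · refine (lt2 _ _ _).2 ?_
    exact Int.lt_floor_add_one _

lemma idx_eq_of_mem {n : ℤ} {k : Fin N → ℤ} {z : Fin N → ℝ} (hz : z ∈ hoC n k) :
    k = idx n z := by
  funext j
  have h := hz j
  symm
  rw [idx, Int.floor_eq_iff]
  exact ⟨(le1 _ _ _).1 h.1, (lt2 _ _ _).1 h.2⟩

lemma abs_sub_le_of_mem_clC {n : ℤ} {k : Fin N → ℤ} {x y : Fin N → ℝ}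
    (hx : x ∈ clC n k) (hy : y ∈ clC n k) (j : Fin N) : |x j - y j| ≤ 2^(-n) := by
  have h1 := hx j; have h2 := hy j
  rw [abs_sub_le_iff]
  constructor <;> [linarith [h1.1, h1.2, h2.1, h2.2]; linarith [h1.1, h1.2, h2.1, h2.2]]

lemma floor_double (t : ℝ) : 2 * ⌊t⌋ ≤ ⌊2*t⌋ ∧ ⌊2*t⌋ ≤ 2 * ⌊t⌋ + 1 := by
  constructor
  · apply Int.le_floor.2; push_cast; nlinarith [Int.floor_le t]
  · have : (⌊2*t⌋ : ℤ) < 2*⌊t⌋ + 2 := by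
      apply Int.floor_lt.2; push_cast; nlinarith [Int.lt_floor_add_one t]
    omega

lemma idx_succ_bounds (n : ℤ) (z : Fin N → ℝ) (j : Fin N) :
    2 * idx n z j ≤ idx (n+1) z j ∧ idx (n+1) z j ≤ 2 * idx n z j + 1 := by
  have : z j * 2^(n+1) = 2 * (z j * 2^n) := by
    rw [zpow_add_one₀ (by norm_num : (2:ℝ) ≠ 0)]; ring
  unfold idx
  rw [this]
  exact floor_double _

lemma zp_succ_mul (n : ℤ) (t : ℝ) : t * 2^(n+1) = 2 * (t * 2^n) := by
  rw [zpow_add_one₀ (by norm_num : (2:ℝ) ≠ 0)]; ring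

lemma clC_succ_subset (n : ℤ) (z : Fin N → ℝ) :
    clC (n+1) (idx (n+1) z) ⊆ clC n (idx n z) := by
  intro x hx j
  have hb := idx_succ_bounds n z j
  have h := hx j
  have c1 : (2 * (idx n z j : ℝ)) ≤ (idx (n+1) z j : ℝ) := by exact_mod_cast hb.1
  have c2 : ((idx (n+1) z j : ℝ)) ≤ 2 * (idx n z j : ℝ) + 1 := by exact_mod_cast hb.2
  have hl := (le1 _ _ _).1 h.1
  have hu := (le2 _ _ _).1 h.2
  rw [zp_succ_mul] at hl hu
  constructor
  · exact (le1 _ _ _).2 (by linarith)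
  · exact (le2 _ _ _).2 (by linarith)

lemma hoC_succ_subset (n : ℤ) (z : Fin N → ℝ) :
    hoC (n+1) (idx (n+1) z) ⊆ hoC n (idx n z) := by
  intro x hx j
  have hb := idx_succ_bounds n z j
  have h := hx j
  have c1 : (2 * (idx n z j : ℝ)) ≤ (idx (n+1) z j : ℝ) := by exact_mod_cast hb.1
  have c2 : ((idx (n+1) z j : ℝ)) ≤ 2 * (idx n z j : ℝ) + 1 := by exact_mod_cast hb.2
  have hl := (le1 _ _ _).1 h.1
  have hu := (lt2 _ _ _).1 h.2
  rw [zp_succ_mul] at hl hu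
  constructor
  · exact (le1 _ _ _).2 (by linarith)
  · exact (lt2 _ _ _).2 (by linarith)

lemma hoC_mono (z : Fin N → ℝ) {n m : ℤ} (h : n ≤ m) :
    hoC m (idx m z) ⊆ hoC n (idx n z) := by
  refine Int.le_induction (motive := fun m _ => hoC m (idx m z) ⊆ hoC n (idx n z)) ?_ ?_ m h
  · exact subset_rfl
  · intro m _ ih
    exact (hoC_succ_subset m z).trans ih

lemma hoC_nested {n m : ℤ} {k k' : Fin N → ℤ} {x : Fin N → ℝ}
    (hm : x ∈ hoC m k) (hn : x ∈ hoC n k') (h : n ≤ m) : hoC m k ⊆ hoC n k' := by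
  rw [idx_eq_of_mem hm, idx_eq_of_mem hn]
  exact hoC_mono x h


lemma mem_clC_idx (n : ℤ) (z : Fin N → ℝ) : z ∈ clC n (idx n z) :=
  hoC_subset_clC _ _ (mem_hoC_idx n z)

def Pc (u : (Fin N → ℝ) → ℝ) (n : ℤ) (k : Fin N → ℤ) : Prop :=
  ∀ x ∈ clC n k, 4 * 2^(-n) ≤ u x

lemma Pc_mono (u : (Fin N → ℝ) → ℝ) (z : Fin N → ℝ) {n m : ℤ} (h : n ≤ m)
    (hP : Pc u n (idx n z)) : Pc u m (idx m z) := by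
  refine Int.le_induction (motive := fun m _ => Pc u m (idx m z)) ?_ ?_ m h
  · exact hP
  · intro m _ ih x hx
    have h1 := ih x (clC_succ_subset m z hx)
    have h2 : (2:ℝ)^(-(m+1)) = 2^(-m)/2 := zp_neg_succ m
    have h3 := zp (-m)
    linarith

lemma exists_Pc (u : (Fin N → ℝ) → ℝ)
    (hu : ∀ x y : Fin N → ℝ, ∀ c : ℝ, 0 ≤ c → (∀ j, |x j - y j| ≤ c) → u x ≤ u y + c)
    (hu0 : ∀ x, 0 < u x) (z : Fin N → ℝ) : ∃ n : ℤ, Pc u n (idx n z) := by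
  obtain ⟨M, hM⟩ := exists_nat_gt (5 / u z)
  refine ⟨(M:ℤ), ?_⟩
  intro x hx
  have hd : ∀ j, |z j - x j| ≤ 2^(-(M:ℤ)) := fun j => abs_sub_le_of_mem_clC (mem_clC_idx _ z) hx j
  have h1 : u z ≤ u x + 2^(-(M:ℤ)) := hu z x _ (zp _).le hd
  have hM2 : (M:ℝ) < 2^(M:ℕ) := by exact_mod_cast Nat.lt_two_pow_self (n := M)
  have huz := hu0 z
  have h5' : 5 < u z * 2^(M:ℕ) := by
    have h5 : 5 / u z < 2^(M:ℕ) := lt_trans hM hM2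
    rw [div_lt_iff₀ huz] at h5; linarith
  have h5'' : (5:ℝ) * 2^(-(M:ℤ)) ≤ u z := by
    refine (le1 _ _ _).2 ?_
    rw [zpow_natCast]; linarith
  have := zp (-(M:ℤ))
  linarith

lemma Pc_bddBelow (u : (Fin N → ℝ) → ℝ) (hu0 : ∀ x, 0 < u x) (z : Fin N → ℝ) :
    ∃ b : ℤ, ∀ n, Pc u n (idx n z) → b ≤ n := by
  obtain ⟨M, hM⟩ := exists_nat_gt (u z / 4)
  refine ⟨-(M:ℤ), ?_⟩
  intro n hP
  have h4 : 4 * 2^(-n) ≤ u z := hP z (mem_clC_idx n z)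
  have hlt : (2:ℝ)^(-n) < 2^((M:ℕ):ℤ) := by
    have hM2 : (M:ℝ) < 2^(M:ℕ) := by exact_mod_cast Nat.lt_two_pow_self (n := M)
    have huz := zp (-n)
    rw [zpow_natCast]
    nlinarith
  have := (zpow_lt_zpow_iff_right₀ (by norm_num : (1:ℝ) < 2)).1 hlt
  omega

lemma exists_nst (u : (Fin N → ℝ) → ℝ)
    (hu : ∀ x y : Fin N → ℝ, ∀ c : ℝ, 0 ≤ c → (∀ j, |x j - y j| ≤ c) → u x ≤ u y + c)
    (hu0 : ∀ x, 0 < u x) : ∃ nf : (Fin N → ℝ) → ℤ,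
    ∀ z, Pc u (nf z) (idx (nf z) z) ∧ ∀ n, Pc u n (idx n z) → nf z ≤ n := by
  have h : ∀ z : Fin N → ℝ, ∃ n0 : ℤ, Pc u n0 (idx n0 z) ∧ ∀ n, Pc u n (idx n z) → n0 ≤ n := by
    intro z
    haveI : DecidablePred fun n : ℤ => Pc u n (idx n z) := Classical.decPred _
    exact Int.exists_least_of_bdd (Pc_bddBelow u hu0 z) (exists_Pc u hu hu0 z)
  choose nf h1 h2 using h
  exact ⟨nf, fun z => ⟨h1 z, h2 z⟩⟩

lemma pi_dist_le {x y : Fin N → ℝ} {c : ℝ} (h0 : 0 ≤ c) (h : ∀ j, |x j - y j| ≤ c) :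
    dist x y ≤ c :=
  (dist_pi_le_iff h0).2 fun j => by rw [Real.dist_eq]; exact h j

lemma exists_u (φ : (Fin N → ℝ) → ℝ) (hc : Continuous φ) (hp : ∀ x, 0 < φ x) :
    ∃ u : (Fin N → ℝ) → ℝ, (∀ x, 0 < u x) ∧ (∀ x, u x ≤ φ x) ∧
      ∀ x y, u x ≤ u y + dist x y := by
  have hne : ∀ x : Fin N → ℝ, (Set.range fun y => φ y + dist x y).Nonempty :=
    fun x => ⟨_, ⟨x, rfl⟩⟩
  have hbdd : ∀ x : Fin N → ℝ, BddBelow (Set.range fun y => φ y + dist x y) := by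
    intro x; refine ⟨0, ?_⟩; rintro r ⟨y, rfl⟩
    have := hp y; have := dist_nonneg (x := x) (y := y); dsimp; linarith
  refine ⟨fun x => sInf (Set.range fun y => φ y + dist x y), ?_, ?_, ?_⟩
  · intro x
    obtain ⟨δ, hδ, hball⟩ := Metric.continuousAt_iff.1 (hc.continuousAt (x := x)) (φ x / 2)
      (by have := hp x; positivity)
    have hlb : ∀ r ∈ Set.range fun y => φ y + dist x y, min (φ x / 2) δ ≤ r := by
      rintro r ⟨y, rfl⟩
      dsimp
      rcases lt_or_ge (dist y x) δ with h | h
      · have h2 := hball h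
        rw [Real.dist_eq] at h2
        have h3 := abs_lt.1 h2
        have h4 := dist_nonneg (x := x) (y := y)
        have := min_le_left (φ x/2) δ
        linarith
      · have h2 : δ ≤ dist x y := by rwa [dist_comm]
        have h3 := (hp y).le
        have := min_le_right (φ x/2) δ
        linarith
    have hge := le_csInf (hne x) hlb
    have hmin : 0 < min (φ x / 2) δ := lt_min (by have := hp x; positivity) hδ
    exact lt_of_lt_of_le hmin hge
  · intro x
    have hmem : φ x + dist x x ∈ Set.range fun y => φ y + dist x y := ⟨x, rfl⟩
    have := csInf_le (hbdd x) hmem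
    simpa using this
  · intro x y
    have hlb : ∀ r ∈ Set.range fun z => φ z + dist y z,
        sInf (Set.range fun z => φ z + dist x z) - dist x y ≤ r := by
      rintro r ⟨z, rfl⟩
      have h1 : sInf (Set.range fun w => φ w + dist x w) ≤ φ z + dist x z :=
        csInf_le (hbdd x) ⟨z, rfl⟩
      have h2 : dist x z ≤ dist x y + dist y z := dist_triangle x y z
      dsimp; linarith
    have := le_csInf (hne y) hlb
    linarith

lemma clamp (n : ℤ) (k : Fin N → ℤ) {p : Fin N → ℝ} (hp : p ∈ oC n k) :
    ∃ x ∈ clC n k, ∀ j, |p j - x j| ≤ 2^(-n)/16 := by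
  have hpos := zp (-n)
  refine ⟨fun j => max ((k j : ℝ) * 2^(-n)) (min (p j) (((k j:ℝ)+1) * 2^(-n))), ?_, ?_⟩
  · intro j
    refine ⟨le_max_left _ _, max_le (by linarith) (min_le_right _ _)⟩
  · intro j
    dsimp only
    have hj := Set.mem_univ_pi.1 hp j
    simp only [cc, sc, mem_Ioo] at hj
    rcases le_total (p j) ((k j:ℝ) * 2^(-n)) with h | h
    · rw [min_eq_left (h.trans (by linarith)), max_eq_left h, abs_le]
      constructor <;> linarith [hj.1]
    · rcases le_total (p j) (((k j:ℝ)+1) * 2^(-n)) with h2 | h2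
      · rw [min_eq_left h2, max_eq_right h]
        simpa using (by positivity : (0:ℝ) ≤ 2^(-n)/16)
      · rw [min_eq_right h2, max_eq_right (by linarith), abs_le]
        constructor <;> linarith [hj.2]

lemma hoC_subset_oC (n : ℤ) (k : Fin N → ℤ) : hoC n k ⊆ oC n k := by
  intro x hx
  rw [oC, Set.mem_univ_pi]
  intro j
  have h := hx j
  have hpos := zp (-n)
  simp only [cc, sc, mem_Ioo]
  constructor
  · linarith [h.1]
  · linarith [h.2]

lemma propB_of_min (u : (Fin N → ℝ) → ℝ)
    (hu : ∀ x y : Fin N → ℝ, ∀ c : ℝ, 0 ≤ c → (∀ j, |x j - y j| ≤ c) → u x ≤ u y + c)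
    {z : Fin N → ℝ} {n : ℤ} (hmin : ¬ Pc u (n-1) (idx (n-1) z)) :
    ∀ x ∈ clC n (idx n z), u x ≤ 10 * 2^(-n) := by
  intro x hx
  rw [Pc] at hmin; push_neg at hmin
  obtain ⟨y, hy, hy2⟩ := hmin
  have hxp : x ∈ clC (n-1) (idx (n-1) z) := by
    have hs := clC_succ_subset (n-1) z
    rw [show n-1+1 = n by ring] at hs
    exact hs hx
  have hd : ∀ j, |x j - y j| ≤ 2^(-(n-1)) := fun j => abs_sub_le_of_mem_clC hxp hy j
  have h1 := hu x y _ (zp _).le hd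
  have he : (2:ℝ)^(-(n-1)) = 2 * 2^(-n) := by
    have h2 := zp_neg_succ (n-1); rw [show n-1+1 = n by ring] at h2; linarith
  rw [he] at h1 hy2
  linarith


lemma core {n n' : ℤ} {k k' : Fin N → ℤ} (u : (Fin N → ℝ) → ℝ)
    (hu : ∀ x y : Fin N → ℝ, ∀ c : ℝ, 0 ≤ c → (∀ j, |x j - y j| ≤ c) → u x ≤ u y + c)
    (hA : ∀ x ∈ clC n k, 4 * 2^(-n) ≤ u x)
    (hA' : ∀ x ∈ clC n' k', 4 * 2^(-n') ≤ u x)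
    (hB : ∀ x ∈ clC n k, u x ≤ 10 * 2^(-n))
    (hB' : ∀ x ∈ clC n' k', u x ≤ 10 * 2^(-n'))
    (hdisj : ∀ x, x ∈ hoC n k → x ∈ hoC n' k' → False)
    (hne : (oC n k ∩ oC n' k').Nonempty) :
    ∃ m : Fin N → ℤ, (∀ j, 2*k j - 1 ≤ m j ∧ m j ≤ 2*k j + 2) ∧
      ¬ (∀ j, 2*k j ≤ m j ∧ m j ≤ 2*k j + 1) ∧ hoC (n+1) m ⊆ hoC n' k' := by
  obtain ⟨p, hp1, hp2⟩ := hne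
  obtain ⟨x, hx, hdx⟩ := clamp n k hp1
  obtain ⟨x', hx', hdx'⟩ := clamp n' k' hp2
  have ha := zp (-n); have hb := zp (-n')
  have hdxx' : ∀ j, |x j - x' j| ≤ 2^(-n)/16 + 2^(-n')/16 := by
    intro j
    have h1 := abs_le.1 (hdx j); have h2 := abs_le.1 (hdx' j)
    rw [abs_le]; constructor <;> linarith
  have h1 : u x' ≤ u x + (2^(-n)/16 + 2^(-n')/16) :=
    hu x' x _ (by positivity) (fun j => by rw [abs_sub_comm]; exact hdxx' j)
  have h2 : u x ≤ u x' + (2^(-n)/16 + 2^(-n')/16) := hu x x' _ (by positivity) hdxx'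
  have e1 := hA' x' hx'
  have e2 := hB x hx
  have e3 := hA x hx
  have e4 := hB' x' hx'
  have hb4a : (2:ℝ)^(-n') < 4 * 2^(-n) := by linarith
  have ha4b : (2:ℝ)^(-n) < 4 * 2^(-n') := by linarith
  have hpow4 : ∀ r : ℤ, (2:ℝ)^(r+2) = 4 * 2^r := by
    intro r
    rw [show r+2 = r+1+1 by ring, zpow_add_one₀ (by norm_num : (2:ℝ) ≠ 0),
      zpow_add_one₀ (by norm_num : (2:ℝ) ≠ 0)]
    ring
  have hnn' : n - 1 ≤ n' := by
    have hlt : (2:ℝ)^(-n') < 2^(-n+2) := by rw [show -n+2 = -n+2 from rfl, hpow4 (-n)]; linarith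
    have := (zpow_lt_zpow_iff_right₀ (by norm_num : (1:ℝ) < 2)).1 hlt
    omega
  have hn'n : n' ≤ n + 1 := by
    have hlt : (2:ℝ)^(-n) < 2^(-n'+2) := by rw [hpow4 (-n')]; linarith
    have := (zpow_lt_zpow_iff_right₀ (by norm_num : (1:ℝ) < 2)).1 hlt
    omega
  have hb2a : (2:ℝ)^(-n') ≤ 2 * 2^(-n) := by
    have hle : (2:ℝ)^(-n') ≤ 2^(-(n-1)) := zpow_le_zpow_right₀ one_le_two (by omega)
    have he : (2:ℝ)^(-(n-1)) = 2 * 2^(-n) := by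
      have h2 := zp_neg_succ (n-1); rw [show n-1+1 = n by ring] at h2; linarith
    linarith
  have ha2b : (2:ℝ)^(-n) ≤ 2 * 2^(-n') := by
    have hle : (2:ℝ)^(-n) ≤ 2^(-(n'-1)) := zpow_le_zpow_right₀ one_le_two (by omega)
    have he : (2:ℝ)^(-(n'-1)) = 2 * 2^(-n') := by
      have h2 := zp_neg_succ (n'-1); rw [show n'-1+1 = n' by ring] at h2; linarith
    linarith
  set q : Fin N → ℝ := fun j => min (x' j) (((k' j:ℝ)+1) * 2^(-n') - 2^(-n)/4) with hqdef
  have hqmem : q ∈ hoC n' k' := by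
    intro j
    constructor
    · exact le_min (hx' j).1 (by linarith [(hx' j).1])
    · exact (min_le_right _ _).trans_lt (by linarith)
  have hqx' : ∀ j, |q j - x' j| ≤ 2^(-n)/4 := by
    intro j
    rcases le_total (x' j) (((k' j:ℝ)+1) * 2^(-n') - 2^(-n)/4) with h | h
    · rw [hqdef]; dsimp only; rw [min_eq_left h]
      simpa using (by positivity : (0:ℝ) ≤ 2^(-n)/4)
    · rw [hqdef]; dsimp only; rw [min_eq_right h, abs_le]
      constructor <;> linarith [(hx' j).2]
  have hqm : q ∈ hoC (n+1) (idx (n+1) q) := mem_hoC_idx _ _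
  have hsub : hoC (n+1) (idx (n+1) q) ⊆ hoC n' k' := hoC_nested hqm hqmem (by omega)
  have hqbound : ∀ j, (k j:ℝ)*2^(-n) - (7/16)*2^(-n) ≤ q j ∧
      q j ≤ ((k j:ℝ)+1)*2^(-n) + (7/16)*2^(-n) := by
    intro j
    have l1 := abs_le.1 (hdx j)
    have l2 := abs_le.1 (hdx' j)
    have l3 := abs_le.1 (hqx' j)
    have h4 := (hx j).1; have h5 := (hx j).2
    constructor <;> linarith
  refine ⟨idx (n+1) q, ?_, ?_, hsub⟩
  · intro j
    have hbj := hqbound j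
    constructor
    · have hq1 : ((2*(k j:ℝ) - 1)) * 2^(-(n+1)) ≤ q j := by
        rw [zp_neg_succ]; linarith [hbj.1]
      have := (le1 _ _ _).1 hq1
      exact Int.le_floor.2 (by push_cast; linarith)
    · have hq2 : q j < ((2*(k j:ℝ) + 3)) * 2^(-(n+1)) := by
        rw [zp_neg_succ]; linarith [hbj.2]
      have h6 := (lt2 _ _ _).1 hq2
      have h7 : idx (n+1) q j < 2*k j + 3 := Int.floor_lt.2 (by push_cast; linarith)
      omega
  · intro hin
    have hsub2 : hoC (n+1) (idx (n+1) q) ⊆ hoC n k := by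
      intro y hy j
      have h := hy j
      have c1 : (2*(k j:ℝ)) ≤ ((idx (n+1) q) j : ℝ) := by exact_mod_cast (hin j).1
      have c2 : (((idx (n+1) q) j:ℝ)) ≤ 2*(k j:ℝ) + 1 := by exact_mod_cast (hin j).2
      have he := zp_neg_succ n
      rw [he] at h
      constructor
      · nlinarith [h.1, mul_le_mul_of_nonneg_right c1 (le_of_lt (show (0:ℝ) < 2^(-n)/2 by positivity))]
      · nlinarith [h.2, mul_le_mul_of_nonneg_right c2 (le_of_lt (show (0:ℝ) < 2^(-n)/2 by positivity))]
    exact hdisj q (hsub2 hqm) hqmem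


end Stmt0P

open Stmt0P

/-- For a continuous positive function `φ` on `ℝ^N` (`N ≥ 1`) there is a
countable cover of `ℝ^N` by open axis-parallel cubes `K i` with corners `c i` and side
lengths `s i > 0` such that `s i < φ x` on `K i`, and each cube meets at most
`4^N - 2^N` other cubes. -/
theorem stmt0 (N : ℕ) (hN : 1 ≤ N) (φ : (Fin N → ℝ) → ℝ)
    (hφcont : Continuous φ) (hφpos : ∀ x, 0 < φ x) :
    ∃ (K : ℕ → Set (Fin N → ℝ)) (c : ℕ → Fin N → ℝ) (s : ℕ → ℝ),
      (∀ i, 0 < s i) ∧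
      (∀ i, K i = Set.univ.pi fun j => Set.Ioo (c i j) (c i j + s i)) ∧
      (⋃ i, K i) = Set.univ ∧
      (∀ i, ∀ x ∈ K i, s i < φ x) ∧
      (∀ i, ({j | j ≠ i ∧ (K i ∩ K j).Nonempty}).Finite ∧
        ({j | j ≠ i ∧ (K i ∩ K j).Nonempty}).ncard ≤ 4 ^ N - 2 ^ N) := by
  obtain ⟨u, hu0, huφ, hulip⟩ := exists_u φ hφcont hφpos
  have hu' : ∀ x y : Fin N → ℝ, ∀ c : ℝ, 0 ≤ c → (∀ j, |x j - y j| ≤ c) → u x ≤ u y + c := by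
    intro x y c h0 h
    have := pi_dist_le h0 h
    have := hulip x y
    linarith
  obtain ⟨nst, hnst⟩ := exists_nst u hu' hu0
  have hP : ∀ z, Pc u (nst z) (idx (nst z) z) := fun z => (hnst z).1
  have hnotP : ∀ z, ¬ Pc u (nst z - 1) (idx (nst z - 1) z) := by
    intro z h
    have := (hnst z).2 _ h
    omega
  set Sel : Set (ℤ × (Fin N → ℤ)) := Set.range (fun z : Fin N → ℝ => (nst z, idx (nst z) z))
    with hSel
  have propA : ∀ z : Fin N → ℝ, ∀ x ∈ clC (nst z) (idx (nst z) z),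
      4 * 2^(-(nst z)) ≤ u x := fun z => hP z
  have propB : ∀ z : Fin N → ℝ, ∀ x ∈ clC (nst z) (idx (nst z) z),
      u x ≤ 10 * 2^(-(nst z)) := fun z => propB_of_min u hu' (hnotP z)
  -- disjointness of distinct selected half-open cubes
  have haux : ∀ z z' : Fin N → ℝ, ∀ x, nst z' < nst z →
      x ∈ hoC (nst z) (idx (nst z) z) → x ∈ hoC (nst z') (idx (nst z') z') → False := by
    intro z z' x hlt hx hx'
    have hsub : hoC (nst z) (idx (nst z) z) ⊆ hoC (nst z') (idx (nst z') z') :=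
      hoC_nested hx hx' (le_of_lt hlt)
    have hzmem : z ∈ hoC (nst z') (idx (nst z') z') := hsub (mem_hoC_idx _ z)
    have hkeq : idx (nst z') z' = idx (nst z') z := idx_eq_of_mem hzmem
    have hPz : Pc u (nst z') (idx (nst z') z) := by rw [← hkeq]; exact hP z'
    have hPz2 : Pc u (nst z - 1) (idx (nst z - 1) z) := Pc_mono u z (by omega) hPz
    exact hnotP z hPz2
  have hdisj : ∀ z z' : Fin N → ℝ,
      (nst z, idx (nst z) z) ≠ (nst z', idx (nst z') z') →
      ∀ x, x ∈ hoC (nst z) (idx (nst z) z) → x ∈ hoC (nst z') (idx (nst z') z') → False := by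
    intro z z' hne x hx hx'
    rcases lt_trichotomy (nst z) (nst z') with h | h | h
    · exact haux z' z x h hx' hx
    · refine hne ?_
      have e1 : idx (nst z) z = idx (nst z) x := idx_eq_of_mem hx
      have e2 : idx (nst z') z' = idx (nst z') x := idx_eq_of_mem hx'
      rw [Prod.mk.injEq]
      exact ⟨h, by rw [e1, e2, h]⟩
    · exact haux z z' x h hx hx'
  have hdisjS : ∀ p ∈ Sel, ∀ q ∈ Sel, p ≠ q →
      ∀ x, x ∈ hoC p.1 p.2 → x ∈ hoC q.1 q.2 → False := by
    rintro p ⟨z, rfl⟩ q ⟨z', rfl⟩ hpq x hx hx'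
    exact hdisj z z' hpq x hx hx'
  have propAS : ∀ p ∈ Sel, ∀ x ∈ clC p.1 p.2, 4 * 2^(-p.1) ≤ u x := by
    rintro p ⟨z, rfl⟩; exact propA z
  have propBS : ∀ p ∈ Sel, ∀ x ∈ clC p.1 p.2, u x ≤ 10 * 2^(-p.1) := by
    rintro p ⟨z, rfl⟩; exact propB z
  -- φ bound on enlarged cubes
  have hphiS : ∀ p ∈ Sel, ∀ x ∈ oC p.1 p.2, sc p.1 < φ x := by
    intro p hp x hx
    obtain ⟨x0, hx0, hd⟩ := clamp p.1 p.2 hx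
    have h1 := propAS p hp x0 hx0
    have h2 : u x0 ≤ u x + 2^(-p.1)/16 :=
      hu' x0 x _ (by positivity) (fun j => by rw [abs_sub_comm]; exact hd j)
    have h3 := huφ x
    have h4 := zp (-p.1)
    simp only [sc]
    linarith
  -- Sel is infinite
  have hSelInf : Sel.Infinite := by
    by_contra hfin
    rw [Set.not_infinite] at hfin
    haveI := hfin.to_subtype
    set g : ℕ → ↥Sel := fun i =>
      ⟨(nst (fun _ => (i:ℝ)), idx (nst (fun _ => (i:ℝ))) (fun _ => (i:ℝ))),
        Set.mem_range_self _⟩ with hg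
    obtain ⟨b, hbinf⟩ := Finite.exists_infinite_fiber g
    have hinfset : (g ⁻¹' {b}).Infinite := Set.infinite_coe_iff.mp hbinf
    obtain ⟨M2, hM2⟩ := exists_nat_gt ((2:ℝ)^(-(b:ℤ×(Fin N → ℤ)).1))
    obtain ⟨i1, hi1, _⟩ := hinfset.exists_gt 0
    obtain ⟨i2, hi2, hgt⟩ := hinfset.exists_gt (i1 + M2)
    have hmem : ∀ i : ℕ, i ∈ g ⁻¹' {b} →
        (fun _ : Fin N => (i:ℝ)) ∈ clC (b : ℤ×(Fin N → ℤ)).1 (b : ℤ×(Fin N → ℤ)).2 := by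
      intro i hi
      have : g i = b := hi
      have hval : ((g i : ↥Sel) : ℤ×(Fin N → ℤ)) = (b : ℤ×(Fin N → ℤ)) := by rw [this]
      have h1 : (fun _ : Fin N => (i:ℝ)) ∈ hoC (nst (fun _ => (i:ℝ)))
          (idx (nst (fun _ => (i:ℝ))) (fun _ => (i:ℝ))) := mem_hoC_idx _ _
      rw [hg] at hval
      simp only at hval
      rw [← hval]
      exact hoC_subset_clC _ _ h1
    have hj0 : (0:ℕ) < N := hN
    have habs := abs_sub_le_of_mem_clC (hmem i1 hi1) (hmem i2 hi2) ⟨0, hj0⟩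
    have h1 := abs_le.1 habs
    have hcast : ((i1:ℝ)) + M2 + 1 ≤ (i2:ℝ) := by exact_mod_cast hgt
    linarith [h1.1, h1.2]
  -- enumeration
  have hSelC : Sel.Countable := Set.to_countable _
  haveI : Countable ↥Sel := hSelC.to_subtype
  haveI : Infinite ↥Sel := hSelInf.to_subtype
  obtain ⟨e⟩ : Nonempty (↥Sel ≃ ℕ) := nonempty_equiv_of_countable
  set Ef : ℕ → ℤ × (Fin N → ℤ) := fun i => (e.symm i : ℤ × (Fin N → ℤ)) with hEf
  have hEfSel : ∀ i, Ef i ∈ Sel := fun i => (e.symm i).2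
  have hEfinj : ∀ i j, Ef i = Ef j → i = j := by
    intro i j hij
    have : e.symm i = e.symm j := Subtype.ext hij
    have := congrArg e this
    simpa using this
  refine ⟨fun i => oC (Ef i).1 (Ef i).2, fun i => cc (Ef i).1 (Ef i).2,
    fun i => sc (Ef i).1, ?_, ?_, ?_, ?_, ?_⟩
  · intro i
    simp only [sc]
    positivity
  · intro i
    rfl
  · apply Set.eq_univ_of_forall
    intro z
    rw [Set.mem_iUnion]
    have hp : (nst z, idx (nst z) z) ∈ Sel := Set.mem_range_self z
    refine ⟨e ⟨_, hp⟩, ?_⟩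
    have hEq : Ef (e ⟨_, hp⟩) = (nst z, idx (nst z) z) := by
      rw [hEf]; simp
    rw [hEq]
    exact hoC_subset_oC _ _ (mem_hoC_idx _ _)
  · intro i x hx
    exact hphiS (Ef i) (hEfSel i) x hx
  · intro i
    set n : ℤ := (Ef i).1 with hn
    set k : Fin N → ℤ := (Ef i).2 with hk
    set Fs : Finset (Fin N → ℤ) :=
      (Fintype.piFinset fun j => Finset.Icc (2*k j - 1) (2*k j + 2)) \
      (Fintype.piFinset fun j => Finset.Icc (2*k j) (2*k j + 1)) with hFs
    have hcard : Fs.card = 4^N - 2^N := by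
      rw [hFs, Finset.card_sdiff_of_subset]
      · rw [Fintype.card_piFinset, Fintype.card_piFinset]
        have c4 : ∀ j : Fin N, (Finset.Icc (2*k j - 1) (2*k j + 2)).card = 4 := by
          intro j; rw [Int.card_Icc]; omega
        have c2 : ∀ j : Fin N, (Finset.Icc (2*k j) (2*k j + 1)).card = 2 := by
          intro j; rw [Int.card_Icc]; omega
        simp [c4, c2, Finset.prod_const]
      · intro m hm
        rw [Fintype.mem_piFinset] at *
        intro j
        have := hm j
        rw [Finset.mem_Icc] at *
        omega
    have hstep : ∀ j : ℕ, ∃ m : Fin N → ℤ,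
        (j ≠ i ∧ (oC (Ef i).1 (Ef i).2 ∩ oC (Ef j).1 (Ef j).2).Nonempty) →
        (m ∈ Fs ∧ hoC (n+1) m ⊆ hoC (Ef j).1 (Ef j).2) := by
      intro j
      by_cases hj : j ≠ i ∧ (oC (Ef i).1 (Ef i).2 ∩ oC (Ef j).1 (Ef j).2).Nonempty
      · obtain ⟨hji, hne⟩ := hj
        have hEne : Ef i ≠ Ef j := fun h => hji (hEfinj j i h.symm)
        obtain ⟨m, hm1, hm2, hm3⟩ := core (n := n) (k := k) (n' := (Ef j).1) (k' := (Ef j).2)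
          u hu'
          (propAS (Ef i) (hEfSel i)) (propAS (Ef j) (hEfSel j))
          (propBS (Ef i) (hEfSel i)) (propBS (Ef j) (hEfSel j))
          (fun x hx hx' => hdisjS (Ef i) (hEfSel i) (Ef j) (hEfSel j) hEne x hx hx')
          hne
        refine ⟨m, fun _ => ⟨?_, hm3⟩⟩
        rw [hFs, Finset.mem_sdiff]
        constructor
        · rw [Fintype.mem_piFinset]
          intro j'
          rw [Finset.mem_Icc]
          exact hm1 j'
        · intro hmem
          rw [Fintype.mem_piFinset] at hmem
          exact hm2 (fun j' => Finset.mem_Icc.1 (hmem j'))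
      · exact ⟨fun _ => 0, fun h => absurd h hj⟩
    choose f hf using hstep
    have hinj : Set.InjOn f {j | j ≠ i ∧ (oC (Ef i).1 (Ef i).2 ∩ oC (Ef j).1 (Ef j).2).Nonempty} := by
      intro j1 h1 j2 h2 hfeq
      obtain ⟨hm1, hs1⟩ := hf j1 h1
      obtain ⟨hm2, hs2⟩ := hf j2 h2
      have hne0 : (hoC (n+1) (f j1)).Nonempty := by
        refine ⟨fun j' => ((f j1) j' : ℝ) * 2^(-(n+1)), fun j' => ?_⟩
        dsimp only
        refine ⟨le_refl _, ?_⟩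
        have := zp (-(n+1))
        linarith
      obtain ⟨w, hw⟩ := hne0
      have hw1 : w ∈ hoC (Ef j1).1 (Ef j1).2 := hs1 hw
      have hw2 : w ∈ hoC (Ef j2).1 (Ef j2).2 := hs2 (hfeq ▸ hw)
      by_contra hne12
      have hEne : Ef j1 ≠ Ef j2 := fun h => hne12 (hEfinj j1 j2 h)
      exact hdisjS (Ef j1) (hEfSel j1) (Ef j2) (hEfSel j2) hEne w hw1 hw2
    have himg : f '' {j | j ≠ i ∧ (oC (Ef i).1 (Ef i).2 ∩ oC (Ef j).1 (Ef j).2).Nonempty} ⊆ ↑Fs := by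
      rintro m ⟨j, hj, rfl⟩
      exact (hf j hj).1
    have hfin : ({j | j ≠ i ∧ (oC (Ef i).1 (Ef i).2 ∩ oC (Ef j).1 (Ef j).2).Nonempty}).Finite :=
      Set.Finite.of_finite_image (Fs.finite_toSet.subset himg) hinj
    refine ⟨hfin, ?_⟩
    calc ({j | j ≠ i ∧ (oC (Ef i).1 (Ef i).2 ∩ oC (Ef j).1 (Ef j).2).Nonempty}).ncard
        = (f '' {j | j ≠ i ∧ (oC (Ef i).1 (Ef i).2 ∩ oC (Ef j).1 (Ef j).2).Nonempty}).ncard :=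
          (Set.ncard_image_of_injOn hinj).symm
      _ ≤ (↑Fs : Set (Fin N → ℤ)).ncard := Set.ncard_le_ncard himg (Fs.finite_toSet)
      _ = Fs.card := Set.ncard_coe_finset _
      _ = 4^N - 2^N := hcard
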